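/- arXiv:2109.00528 — 4 statements merged into one kernel-verified Lean document; each statement's English description precedes it below -/
import Mathlib

section
/- Let Ω ⊂ ℝ^d be bounded and let f, g be probability density functions on Ω with f, g ∈ L^∞(Ω). Define σ(z) = ∫₀¹ ∫_Ω f((z−ty)/(1−t)) g(y) (1−t)^{−d} dy dt (extending f, g by zero outside Ω). Then σ ∈ L^∞(Ω), with ‖σ‖_∞ ≤ C(‖f‖_∞ + ‖g‖_∞) for some constant C depending only on d. -/
open MeasureTheory Set

/-!
For fixed `t`, the inner integral is at most `(1 - t)⁻ᵈ ‖f‖_∞` (bound `f` and use `∫ g = 1`), and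
also at most `t⁻ᵈ ‖g‖_∞` (bound `g`; the substitution `x = (z - t y) / (1 - t)` shows that the
remaining `f`-factor has mass `((1 - t) / t)ᵈ`). Since `max t (1 - t) ≥ 1/2`, one of the two is at
most `2ᵈ (‖f‖_∞ + ‖g‖_∞)`, and integrating over `t ∈ (0, 1)` gives the claim with `C = 2ᵈ`.
-/

section HaarScaling

variable {E F : Type*} [NormedAddCommGroup E] [NormedSpace ℝ E] [FiniteDimensional ℝ E]
  [MeasurableSpace E] [BorelSpace E] (μ : Measure E) [μ.IsAddHaarMeasure] [NormedAddCommGroup F]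

theorem integral_comp_sub_smul [NormedSpace ℝ F] (f : E → F) (c : E) {a : ℝ} (ha : 0 < a) :
    ∫ y, f (c - a • y) ∂μ = (a ^ Module.finrank ℝ E)⁻¹ • ∫ x, f x ∂μ := by
  rw [μ.integral_comp_smul (fun w => f (c - w)) a, integral_sub_left_eq_self f μ c,
    abs_of_pos (by positivity)]

variable {μ} in
theorem MeasureTheory.Integrable.comp_sub_smul {f : E → F} (hf : Integrable f μ) (c : E)
    {a : ℝ} (ha : a ≠ 0) : Integrable (fun y => f (c - a • y)) μ :=
  (hf.comp_sub_left c).comp_smul ha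

end HaarScaling

theorem setIntegral_mul_le_mul_integral {α : Type*} [MeasurableSpace α] {μ : Measure α}
    {F G : α → ℝ} {s : Set α} {C : ℝ} (hF₀ : ∀ x, 0 ≤ F x) (hFC : ∀ x, F x ≤ C)
    (hG₀ : ∀ x, 0 ≤ G x) (hG : Integrable G μ) :
    ∫ x in s, F x * G x ∂μ ≤ C * ∫ x, G x ∂μ := by
  have hCG : Integrable (fun x => C * G x) μ := hG.const_mul C
  calc ∫ x in s, F x * G x ∂μ
      ≤ ∫ x in s, C * G x ∂μ :=
        integral_mono_of_nonneg (.of_forall fun x => mul_nonneg (hF₀ x) (hG₀ x))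
          hCG.integrableOn (.of_forall fun x => mul_le_mul_of_nonneg_right (hFC x) (hG₀ x))
    _ ≤ ∫ x, C * G x ∂μ :=
        setIntegral_le_integral hCG
          (.of_forall fun x => mul_nonneg ((hF₀ x).trans (hFC x)) (hG₀ x))
    _ = C * ∫ x, G x ∂μ := integral_const_mul C G

section Interpolation

variable {E : Type*} [NormedAddCommGroup E] [NormedSpace ℝ E] {f g : E → ℝ} {Ω : Set E}
  {z : E} {t Cf Cg : ℝ}

theorem setIntegral_interpolation_le_left [MeasurableSpace E] {μ : Measure E} (n : ℕ)
    (ht : t < 1) (hf₀ : ∀ x, 0 ≤ f x) (hfC : ∀ x, f x ≤ Cf) (hg₀ : ∀ x, 0 ≤ g x)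
    (hg : ∫ y, g y ∂μ = 1) :
    ∫ y in Ω, f ((1 - t)⁻¹ • (z - t • y)) * g y * ((1 - t) ^ n)⁻¹ ∂μ
      ≤ ((1 - t) ^ n)⁻¹ * Cf := by
  have h1t : 0 < 1 - t := by linarith
  have hk : 0 ≤ ((1 - t) ^ n)⁻¹ := by positivity
  have := setIntegral_mul_le_mul_integral (μ := μ) (s := Ω) (G := g)
    (F := fun y => f ((1 - t)⁻¹ • (z - t • y)) * ((1 - t) ^ n)⁻¹) (C := Cf * ((1 - t) ^ n)⁻¹)
    (fun y => mul_nonneg (hf₀ _) hk) (fun y => mul_le_mul_of_nonneg_right (hfC _) hk) hg₀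
    (.of_integral_ne_zero (by simp [hg]))
  simpa only [mul_right_comm _ (g _), hg, mul_one, mul_comm Cf] using this

theorem setIntegral_interpolation_le_right [FiniteDimensional ℝ E] [MeasurableSpace E]
    [BorelSpace E] {μ : Measure E} [μ.IsAddHaarMeasure] (ht : t ∈ Ioo 0 1)
    (hf₀ : ∀ x, 0 ≤ f x) (hf : ∫ x, f x ∂μ = 1) (hgC : ∀ x, g x ≤ Cg) (hg₀ : ∀ x, 0 ≤ g x) :
    ∫ y in Ω, f ((1 - t)⁻¹ • (z - t • y)) * g y * ((1 - t) ^ Module.finrank ℝ E)⁻¹ ∂μ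
      ≤ (t ^ Module.finrank ℝ E)⁻¹ * Cg := by
  obtain ⟨ht₀, ht₁⟩ := ht
  set n := Module.finrank ℝ E
  set a := (1 - t)⁻¹ * t
  have h1t : 0 < 1 - t := by linarith
  have ha : 0 < a := by positivity
  have hk : 0 ≤ ((1 - t) ^ n)⁻¹ := by positivity
  have hrw : ∀ y : E, (1 - t)⁻¹ • (z - t • y) = (1 - t)⁻¹ • z - a • y := fun y => by
    rw [smul_sub, smul_smul]
  have hG : ∫ y, f ((1 - t)⁻¹ • z - a • y) * ((1 - t) ^ n)⁻¹ ∂μ = (t ^ n)⁻¹ := by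
    rw [integral_mul_const, integral_comp_sub_smul μ f _ ha, hf, smul_eq_mul, mul_one, ← mul_inv,
      ← mul_pow, mul_right_comm, inv_mul_cancel₀ h1t.ne', one_mul]
  calc ∫ y in Ω, f ((1 - t)⁻¹ • (z - t • y)) * g y * ((1 - t) ^ n)⁻¹ ∂μ
      = ∫ y in Ω, g y * (f ((1 - t)⁻¹ • z - a • y) * ((1 - t) ^ n)⁻¹) ∂μ := by
        congr 1 with y
        rw [hrw]
        ring
    _ ≤ Cg * ∫ y, f ((1 - t)⁻¹ • z - a • y) * ((1 - t) ^ n)⁻¹ ∂μ :=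
        setIntegral_mul_le_mul_integral hg₀ hgC (fun y => mul_nonneg (hf₀ _) hk)
          (((Integrable.of_integral_ne_zero (by simp [hf])).comp_sub_smul _ ha.ne').mul_const _)
    _ = (t ^ n)⁻¹ * Cg := by rw [hG, mul_comm]

theorem setIntegral_interpolation_le [FiniteDimensional ℝ E] [MeasurableSpace E]
    [BorelSpace E] {μ : Measure E} [μ.IsAddHaarMeasure] (ht : t ∈ Ioo 0 1)
    (hf₀ : ∀ x, 0 ≤ f x) (hfC : ∀ x, f x ≤ Cf) (hf : ∫ x, f x ∂μ = 1)
    (hg₀ : ∀ x, 0 ≤ g x) (hgC : ∀ x, g x ≤ Cg) (hg : ∫ x, g x ∂μ = 1) :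
    ∫ y in Ω, f ((1 - t)⁻¹ • (z - t • y)) * g y * ((1 - t) ^ Module.finrank ℝ E)⁻¹ ∂μ
      ≤ 2 ^ Module.finrank ℝ E * (Cf + Cg) := by
  have hCf : 0 ≤ Cf := (hf₀ 0).trans (hfC 0)
  have hCg : 0 ≤ Cg := (hg₀ 0).trans (hgC 0)
  have inv_pow_le (s : ℝ) (hs : 2⁻¹ ≤ s) :
      (s ^ Module.finrank ℝ E)⁻¹ ≤ 2 ^ Module.finrank ℝ E := by
    rw [← inv_pow]
    exact pow_le_pow_left₀ (by positivity) (inv_le_of_inv_le₀ two_pos hs) _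
  rcases le_total t 2⁻¹ with h | h
  · calc _ ≤ ((1 - t) ^ Module.finrank ℝ E)⁻¹ * Cf :=
          setIntegral_interpolation_le_left _ ht.2 hf₀ hfC hg₀ hg
      _ ≤ 2 ^ Module.finrank ℝ E * (Cf + Cg) := by
          gcongr
          · exact inv_pow_le _ (by linarith)
          · linarith
  · calc _ ≤ (t ^ Module.finrank ℝ E)⁻¹ * Cg :=
          setIntegral_interpolation_le_right ht hf₀ hf hgC hg₀
      _ ≤ 2 ^ Module.finrank ℝ E * (Cf + Cg) := by
          gcongr
          · exact inv_pow_le _ h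
          · linarith

end Interpolation

/-- If `f, g` are bounded probability densities on a bounded set `Ω ⊂ ℝ^d`
(extended by zero outside `Ω`), then the interpolation density
`σ(z) = ∫₀¹ ∫_Ω f((z−ty)/(1−t)) g(y) (1−t)^{−d} dy dt` is essentially bounded, with
`σ(z) ≤ C (‖f‖_∞ + ‖g‖_∞)` for a constant `C` depending only on the dimension `d`. -/
theorem stmt_0 (d : ℕ) :
    ∃ C : ℝ, 0 < C ∧
      ∀ (Ω : Set (EuclideanSpace ℝ (Fin d))) (f g : EuclideanSpace ℝ (Fin d) → ℝ)
        (Cf Cg : ℝ),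
        Bornology.IsBounded Ω →
        Measurable f → Measurable g →
        (∀ x, 0 ≤ f x) → (∀ x, 0 ≤ g x) →
        (∀ x, f x ≤ Cf) → (∀ x, g x ≤ Cg) →
        (∀ x, x ∉ Ω → f x = 0) → (∀ x, x ∉ Ω → g x = 0) →
        (∫ x, f x = 1) → (∫ x, g x = 1) →
        ∀ z : EuclideanSpace ℝ (Fin d),
          (∫ t in Ioo (0:ℝ) 1, ∫ y in Ω,
              f ((1 - t)⁻¹ • (z - t • y)) * g y * ((1 - t) ^ d)⁻¹)
            ≤ C * (Cf + Cg) := by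
  refine ⟨2 ^ d, by positivity, fun Ω f g Cf Cg _ _ _ hf₀ hg₀ hfC hgC _ _ hf hg z => ?_⟩
  have hslice : ∀ t ∈ Ioo (0:ℝ) 1,
      ‖∫ y in Ω, f ((1 - t)⁻¹ • (z - t • y)) * g y * ((1 - t) ^ d)⁻¹‖ ≤ 2 ^ d * (Cf + Cg) := by
    intro t ht
    have h1t : 0 < 1 - t := by linarith [ht.2]
    have hslice_nonneg :
        0 ≤ ∫ y in Ω, f ((1 - t)⁻¹ • (z - t • y)) * g y * ((1 - t) ^ d)⁻¹ :=
      integral_nonneg fun y => by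
        have := hf₀ ((1 - t)⁻¹ • (z - t • y))
        have := hg₀ y
        positivity
    rw [Real.norm_of_nonneg hslice_nonneg]
    simpa only [finrank_euclideanSpace_fin] using
      setIntegral_interpolation_le (Ω := Ω) (z := z) ht hf₀ hfC hf hg₀ hgC hg
  have h := norm_setIntegral_le_of_norm_le_const (μ := volume) measure_Ioo_lt_top hslice
  rw [Real.volume_real_Ioo, sub_zero, max_eq_left zero_le_one, mul_one] at h
  exact (le_abs_self _).trans h
end

section
/- Let μ and ν be probability measures on ℝ^d with densities f and g, and let σ be the pushforward of U[0,1] ⊗ μ ⊗ ν under π(t,x,y) = (1−t)x + ty. Then σ is absolutely continuous with respect to Lebesgue measure with density σ(z) = ∫₀¹ ∫ f((z−ty)/(1−t)) g(y) (1−t)^{−d} dy dt. -/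
/-!
For fixed `t < 1` and fixed `y`, the map `x ↦ (1 - t) • x + t • y` is affine with Jacobian
`(1 - t) ^ d`, so it pushes `f dx` forward to `f ((1 - t)⁻¹ • (z - t • y)) (1 - t)⁻ᵈ dz`.
Mixing over `y ∼ ν` and then over `t ∼ U[0,1]` (Tonelli) gives the density of `σ` as an iterated
lower integral. As `σ` is a probability measure this density is finite almost everywhere, and
there the lower integrals agree with the Bochner integrals of the statement.
-/

open MeasureTheory Set
open scoped ENNReal

theorem map_prod_eq_withDensity_lintegral {α β γ : Type*} [MeasurableSpace α]
    [MeasurableSpace β] [MeasurableSpace γ] {τ : Measure α} {m : Measure β} {μ₀ : Measure γ}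
    [SFinite τ] [SFinite m] [SFinite μ₀] {F : α → β → γ} (hF : Measurable (Function.uncurry F))
    {ρ : α → γ → ℝ≥0∞} (hρ : Measurable (Function.uncurry ρ))
    (h : ∀ᵐ a ∂τ, m.map (F a) = μ₀.withDensity (ρ a)) :
    (τ.prod m).map (Function.uncurry F) = μ₀.withDensity (fun c => ∫⁻ a, ρ a c ∂τ) := by
  ext s hs
  have hslice : ∀ᵐ a ∂τ, m (Prod.mk a ⁻¹' (Function.uncurry F ⁻¹' s)) = ∫⁻ c in s, ρ a c ∂μ₀ :=
    h.mono fun a ha => by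
      rw [← withDensity_apply _ hs, ← ha, Measure.map_apply hF.of_uncurry_left hs]
      rfl
  rw [Measure.map_apply hF hs, Measure.prod_apply (hF hs), withDensity_apply _ hs,
    lintegral_congr_ae hslice, lintegral_lintegral_swap hρ.aemeasurable]

section

variable {E : Type*} [NormedAddCommGroup E] [NormedSpace ℝ E] [MeasurableSpace E] [BorelSpace E]
  [FiniteDimensional ℝ E] (μ₀ : Measure E) [μ₀.IsAddHaarMeasure]

theorem map_smul_add_withDensity {f : E → ℝ≥0∞} (hf : Measurable f) {a : ℝ} (ha : a ≠ 0)
    (v : E) :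
    (μ₀.withDensity f).map (fun x => a • x + v) = μ₀.withDensity
      (fun u => f (a⁻¹ • (u - v)) * ENNReal.ofReal |(a ^ Module.finrank ℝ E)⁻¹|) := by
  have hA : Measurable fun x : E => a • x + v := by fun_prop
  have hmap : μ₀.map (fun x => a • x + v)
      = ENNReal.ofReal |(a ^ Module.finrank ℝ E)⁻¹| • μ₀ := by
    rw [show (fun x : E => a • x + v) = (· + v) ∘ (a • ·) from rfl,
      ← Measure.map_map (measurable_add_const v) (measurable_const_smul a),
      Measure.map_addHaar_smul μ₀ ha, Measure.map_smul, map_add_right_eq_self]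
  ext s hs
  rw [Measure.map_apply hA hs, withDensity_apply _ (hA hs), withDensity_apply _ hs,
    lintegral_mul_const _ (by fun_prop), mul_comm, ← smul_eq_mul, ← lintegral_smul_measure,
    ← Measure.restrict_smul, ← hmap, setLIntegral_map hs (by fun_prop) hA]
  simp [ha]

theorem map_smul_add_smul_prod_withDensity {f g : E → ℝ≥0∞} (hf : Measurable f)
    (hg : Measurable g) {a : ℝ} (ha : a ≠ 0) (b : ℝ) :
    ((μ₀.withDensity f).prod (μ₀.withDensity g)).map (fun p => a • p.1 + b • p.2)
      = μ₀.withDensity (fun u => ∫⁻ y, f (a⁻¹ • (u - b • y)) * g y *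
          ENNReal.ofReal |(a ^ Module.finrank ℝ E)⁻¹| ∂μ₀) := by
  rw [← Measure.prod_swap, Measure.map_map (by fun_prop) measurable_swap]
  refine (map_prod_eq_withDensity_lintegral (F := fun y x => a • x + b • y) (by fun_prop)
    (ρ := fun y u => f (a⁻¹ • (u - b • y)) * ENNReal.ofReal |(a ^ Module.finrank ℝ E)⁻¹|)
    (by fun_prop) (ae_of_all _ fun y => map_smul_add_withDensity μ₀ hf ha (b • y))).trans ?_
  congr 1
  funext u
  rw [lintegral_withDensity_eq_lintegral_mul _ hg (by fun_prop)]
  refine lintegral_congr fun y => ?_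
  simp only [Pi.mul_apply]
  ring

end

theorem ofReal_integral_integral_eq_lintegral_lintegral {α β : Type*} [MeasurableSpace α]
    [MeasurableSpace β] {μ : Measure α} {ν : Measure β} [SFinite ν] {F : α → β → ℝ}
    (hF : Measurable (Function.uncurry F)) (h0 : ∀ᵐ a ∂μ, 0 ≤ᵐ[ν] F a)
    (hfin : ∫⁻ a, ∫⁻ b, ENNReal.ofReal (F a b) ∂ν ∂μ ≠ ∞) :
    ENNReal.ofReal (∫ a, ∫ b, F a b ∂ν ∂μ) = ∫⁻ a, ∫⁻ b, ENNReal.ofReal (F a b) ∂ν ∂μ := by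
  have hm : Measurable fun a => ∫⁻ b, ENNReal.ofReal (F a b) ∂ν :=
    hF.ennreal_ofReal.lintegral_prod_right'
  have hinner : ∀ᵐ a ∂μ, ∫ b, F a b ∂ν = (∫⁻ b, ENNReal.ofReal (F a b) ∂ν).toReal :=
    h0.mono fun a ha =>
      integral_eq_lintegral_of_nonneg_ae ha hF.of_uncurry_left.aestronglyMeasurable
  rw [integral_congr_ae hinner, integral_toReal hm.aemeasurable (ae_lt_top hm hfin),
    ENNReal.ofReal_toReal hfin]

theorem isProbabilityMeasure_withDensity_ofReal {α : Type*} [MeasurableSpace α]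
    {μ : Measure α} {f : α → ℝ} (hf0 : ∀ x, 0 ≤ f x) (hf1 : ∫ x, f x ∂μ = 1) :
    IsProbabilityMeasure (μ.withDensity fun x => ENNReal.ofReal (f x)) := by
  have hfi : Integrable f μ := by
    by_contra h
    rw [integral_undef h] at hf1
    exact zero_ne_one hf1
  constructor
  rw [withDensity_apply _ MeasurableSet.univ, Measure.restrict_univ,
    ← ofReal_integral_eq_lintegral_ofReal hfi (ae_of_all _ hf0), hf1, ENNReal.ofReal_one]

/-- if `μ = f dx` and `ν = g dx` are absolutely continuous probability measures
on `ℝ^d` and `σ` is the pushforward of `U[0,1] ⊗ μ ⊗ ν` under `π(t,x,y) = (1−t)x + ty`, then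
`σ` is absolutely continuous with respect to Lebesgue measure, with density
`σ(z) = ∫₀¹ ∫ f((z−ty)/(1−t)) g(y) (1−t)^{−d} dy dt`. -/
theorem stmt_2 (d : ℕ) (f g : EuclideanSpace ℝ (Fin d) → ℝ)
    (hfm : Measurable f) (hgm : Measurable g)
    (hf0 : ∀ x, 0 ≤ f x) (hg0 : ∀ x, 0 ≤ g x)
    (hf1 : ∫ x, f x = 1) (hg1 : ∫ x, g x = 1)
    (μ ν : Measure (EuclideanSpace ℝ (Fin d)))
    (hμ : μ = volume.withDensity (fun x => ENNReal.ofReal (f x)))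
    (hν : ν = volume.withDensity (fun x => ENNReal.ofReal (g x)))
    (σm : Measure (EuclideanSpace ℝ (Fin d)))
    (hσ : σm = Measure.map
        (fun p : ℝ × EuclideanSpace ℝ (Fin d) × EuclideanSpace ℝ (Fin d) =>
          (1 - p.1) • p.2.1 + p.1 • p.2.2)
        (((volume : Measure ℝ).restrict (Icc (0:ℝ) 1)).prod (μ.prod ν))) :
    σm ≪ (volume : Measure (EuclideanSpace ℝ (Fin d))) ∧
      σm = volume.withDensity (fun z => ENNReal.ofReal
        (∫ t in Ioo (0:ℝ) 1, ∫ y,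
          f ((1 - t)⁻¹ • (z - t • y)) * g y * ((1 - t) ^ d)⁻¹)) := by
  subst hμ hν hσ
  have := isProbabilityMeasure_withDensity_ofReal hf0 hf1
  have := isProbabilityMeasure_withDensity_ofReal hg0 hg1
  have hslice : ∀ᵐ t ∂(volume.restrict (Ioo (0:ℝ) 1)),
      ((volume.withDensity fun x => ENNReal.ofReal (f x)).prod
        (volume.withDensity fun x => ENNReal.ofReal (g x))).map
          (fun q => (1 - t) • q.1 + t • q.2)
        = volume.withDensity (fun z => ∫⁻ y,
            ENNReal.ofReal (f ((1 - t)⁻¹ • (z - t • y)) * g y * ((1 - t) ^ d)⁻¹)) := by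
    filter_upwards [ae_restrict_mem measurableSet_Ioo] with t ht
    have hpos : 0 < 1 - t := by linarith [ht.2]
    rw [map_smul_add_smul_prod_withDensity volume hfm.ennreal_ofReal hgm.ennreal_ofReal
      hpos.ne', finrank_euclideanSpace_fin, abs_of_pos (by positivity)]
    congr with z
    refine lintegral_congr fun y => ?_
    rw [ENNReal.ofReal_mul (mul_nonneg (hf0 _) (hg0 _)), ENNReal.ofReal_mul (hf0 _)]
  rw [← Measure.restrict_congr_set Ioo_ae_eq_Icc]
  have hσ := map_prod_eq_withDensity_lintegral
    (F := fun t (q : EuclideanSpace ℝ (Fin d) × EuclideanSpace ℝ (Fin d)) =>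
      (1 - t) • q.1 + t • q.2)
    (by fun_prop) (by fun_prop) hslice
  refine ⟨hσ ▸ withDensity_absolutelyContinuous _ _, hσ.trans (withDensity_congr_ae ?_)⟩
  have hfin : ∫⁻ z, ∫⁻ t in Ioo (0:ℝ) 1, ∫⁻ y,
      ENNReal.ofReal (f ((1 - t)⁻¹ • (z - t • y)) * g y * ((1 - t) ^ d)⁻¹) ≠ ∞ := by
    rw [← setLIntegral_univ, ← withDensity_apply _ .univ, ← hσ]
    exact measure_ne_top _ _
  filter_upwards [ae_lt_top (by fun_prop) hfin] with z hz
  refine (ofReal_integral_integral_eq_lintegral_lintegral (by fun_prop)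
    (ae_restrict_of_forall_mem measurableSet_Ioo fun t ht => ae_of_all _ fun y => ?_) hz.ne).symm
  have hpos : 0 < 1 - t := by linarith [ht.2]
  exact mul_nonneg (mul_nonneg (hf0 _) (hg0 _)) (by positivity)
end

section
/- Let Ω ⊂ ℝ^d be open, bounded and convex, f, g ∈ L^∞(Ω) probability densities on Ω, and suppose inf_{x∈Ω} f(x) = ε > 0. Then there is a constant C depending only on Ω such that the interpolation density σ(x) = ∫₀¹ ∫_Ω f((x−ty)/(1−t)) g(y) (1−t)^{−d} dy dt satisfies σ(x) ≥ C ε · dist(x, ∂Ω) for all x ∈ Ω. -/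
open MeasureTheory Set Metric Module

/-!
For `0 ≤ t < dist(x, ∂Ω) / (2 (diam Ω + 1))` the point `z = (1 - t)⁻¹ (x - t y)`, i.e. the `z` with
`(1 - t) z + t y = x`, lies within `dist(x, ∂Ω)` of `x` for every `y ∈ Ω`, hence in `Ω`; so
`f z ≥ ε` and the time-`t` slice of `σ(x)` is at least `ε ∫ g = ε`. Integrating over these `t`
gives the bound. For the `t`-integral to be a genuine integral, each slice is bounded by
`Cf (1 - t)⁻ᵈ` and, after the change of variables `y ↦ z`, also by `Cg t⁻ᵈ`, hence by
`max Cf Cg 2ᵈ`.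
-/

theorem Metric.ball_infDist_frontier_subset {E : Type*} [NormedAddCommGroup E]
    [NormedSpace ℝ E] [FiniteDimensional ℝ E] {s : Set E} {x : E} (hx : x ∈ s) :
    ball x (infDist x (frontier s)) ⊆ s := by
  rcases eq_or_ne s univ with rfl | hs
  · exact subset_univ _
  obtain ⟨y, hy, hxy⟩ := exists_mem_frontier_infDist_compl_eq_dist hx hs
  exact (ball_subset_ball (hxy ▸ infDist_le_dist_of_mem hy)).trans ball_infDist_compl_subset

theorem Metric.infDist_frontier_le_diam {X : Type*} [PseudoMetricSpace X] {s : Set X}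
    (hs : Bornology.IsBounded s) {x : X} (hx : x ∈ s) : infDist x (frontier s) ≤ diam s := by
  rcases (frontier s).eq_empty_or_nonempty with h | ⟨y, hy⟩
  · simp [h, diam_nonneg]
  calc infDist x (frontier s) ≤ dist x y := infDist_le_dist_of_mem hy
    _ ≤ diam (closure s) :=
      dist_le_diam_of_mem hs.closure (subset_closure hx) (frontier_subset_closure hy)
    _ = diam s := diam_closure s

theorem mul_sub_le_setIntegral_Ioo {F : ℝ → ℝ} {a b c ε : ℝ} (hF : IntegrableOn F (Ioo a b))
    (hF0 : ∀ t ∈ Ioo a b, 0 ≤ F t) (hac : a ≤ c) (hcb : c ≤ b) (hε : ∀ t ∈ Ioo a c, ε ≤ F t) :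
    ε * (c - a) ≤ ∫ t in Ioo a b, F t := by
  have hsub : Ioo a c ⊆ Ioo a b := Ioo_subset_Ioo_right hcb
  calc ε * (c - a) = ε * volume.real (Ioo a c) := by
        rw [Real.volume_real_Ioo_of_le hac]
    _ ≤ ∫ t in Ioo a c, F t :=
        setIntegral_ge_of_const_le_real measurableSet_Ioo measure_Ioo_lt_top.ne hε
          (hF.mono_set hsub)
    _ ≤ ∫ t in Ioo a b, F t :=
        setIntegral_mono_set hF ((ae_restrict_iff' measurableSet_Ioo).2 (ae_of_all _ hF0))
          hsub.eventuallyLE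

section
variable {E : Type*} [NormedAddCommGroup E] [NormedSpace ℝ E]

theorem interpolation_sub_self (x y : E) {t : ℝ} (ht : t ≠ 1) :
    (1 - t)⁻¹ • (x - t • y) - x = (t / (1 - t)) • (x - y) := by
  have : 1 - t ≠ 0 := sub_ne_zero.2 ht.symm
  match_scalars
  · field_simp; ring
  · field_simp

theorem mapsTo_interpolation [FiniteDimensional ℝ E] {Ω : Set E} (hΩ : Bornology.IsBounded Ω)
    {x : E} (hx : x ∈ Ω) {t : ℝ} (ht0 : 0 ≤ t)
    (ht : t < infDist x (frontier Ω) / (2 * (diam Ω + 1))) :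
    MapsTo (fun y ↦ (1 - t)⁻¹ • (x - t • y)) Ω Ω := by
  set r := infDist x (frontier Ω)
  have hD := diam_nonneg (s := Ω)
  have hr := infDist_frontier_le_diam hΩ hx
  rw [lt_div_iff₀ (by positivity)] at ht
  have ht1 : t < 1 / 2 := by nlinarith
  intro y hy
  apply ball_infDist_frontier_subset hx
  rw [mem_ball, dist_eq_norm, interpolation_sub_self x y (by linarith), norm_smul,
    Real.norm_of_nonneg (div_nonneg ht0 (by linarith))]
  calc t / (1 - t) * ‖x - y‖ ≤ 2 * t * diam Ω := by
        gcongr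
        · rw [div_le_iff₀ (by linarith)]; nlinarith
        · rw [← dist_eq_norm]; exact dist_le_diam_of_mem hΩ hx hy
    _ < r := by nlinarith
end

section
variable {E : Type*} [NormedAddCommGroup E] [NormedSpace ℝ E] [MeasurableSpace E]
  {μ : Measure E} {Ω : Set E} {f g : E → ℝ} {d : ℕ} {x : E} {t : ℝ}

/-- For fixed `t` and `d = finrank ℝ E`, the density at `x` of `(1 - t) X + t Y` where
`X ~ f μ` and `Y ~ g μ` with `g` supported in `Ω`. -/
noncomputable def interpolationSlice (μ : Measure E) (Ω : Set E) (f g : E → ℝ) (d : ℕ) (x : E)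
    (t : ℝ) : ℝ :=
  ∫ y in Ω, f ((1 - t)⁻¹ • (x - t • y)) * g y * ((1 - t) ^ d)⁻¹ ∂μ

theorem interpolationSlice_nonneg (hf0 : ∀ z, 0 ≤ f z) (hg0 : ∀ z, 0 ≤ g z) (ht : t ≤ 1) :
    0 ≤ interpolationSlice μ Ω f g d x t :=
  integral_nonneg fun y ↦
    mul_nonneg (mul_nonneg (hf0 _) (hg0 y)) (inv_nonneg.2 (pow_nonneg (sub_nonneg.2 ht) d))

variable [BorelSpace E]

theorem integrableOn_interpolation_integrand {Cf : ℝ} (hf : Measurable f)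
    (hf0 : ∀ z, 0 ≤ f z) (hfC : ∀ z, f z ≤ Cf) (hg : IntegrableOn g Ω μ) (c : ℝ) :
    IntegrableOn (fun y ↦ f ((1 - t)⁻¹ • (x - t • y)) * g y * c) Ω μ :=
  (hg.bdd_mul (hf.comp (by fun_prop)).aestronglyMeasurable
    (ae_of_all _ fun y ↦ (Real.norm_of_nonneg (hf0 _)).trans_le (hfC _))).mul_const c

theorem le_interpolationSlice {ε Cf : ℝ} (hΩ : MeasurableSet Ω) (hf : Measurable f)
    (hf0 : ∀ z, 0 ≤ f z) (hfC : ∀ z, f z ≤ Cf) (hg : IntegrableOn g Ω μ) (hg0 : ∀ z, 0 ≤ g z)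
    (hg1 : ∫ y in Ω, g y ∂μ = 1) (ht0 : 0 ≤ t) (ht1 : t < 1)
    (hmaps : MapsTo (fun y ↦ (1 - t)⁻¹ • (x - t • y)) Ω Ω) (hε : ∀ z ∈ Ω, ε ≤ f z) :
    ε ≤ interpolationSlice μ Ω f g d x t := by
  have hc : 1 ≤ ((1 - t) ^ d)⁻¹ :=
    (one_le_inv₀ (pow_pos (by linarith) d)).2 (pow_le_one₀ (by linarith) (by linarith))
  calc ε = ∫ y in Ω, ε * g y ∂μ := by rw [integral_const_mul, hg1, mul_one]
    _ ≤ _ := setIntegral_mono_on (hg.const_mul ε)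
        (integrableOn_interpolation_integrand hf hf0 hfC hg _) hΩ fun y hy ↦
          calc ε * g y ≤ f ((1 - t)⁻¹ • (x - t • y)) * g y :=
                mul_le_mul_of_nonneg_right (hε _ (hmaps hy)) (hg0 y)
            _ ≤ f ((1 - t)⁻¹ • (x - t • y)) * g y * ((1 - t) ^ d)⁻¹ :=
                le_mul_of_one_le_right (mul_nonneg (hf0 _) (hg0 y)) hc

theorem interpolationSlice_le_left {Cf : ℝ} (hΩ : MeasurableSet Ω) (hf : Measurable f)
    (hf0 : ∀ z, 0 ≤ f z) (hfC : ∀ z, f z ≤ Cf) (hg : IntegrableOn g Ω μ) (hg0 : ∀ z, 0 ≤ g z)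
    (hg1 : ∫ y in Ω, g y ∂μ = 1) (ht1 : t ≤ 1) :
    interpolationSlice μ Ω f g d x t ≤ Cf * ((1 - t) ^ d)⁻¹ := by
  have hc : 0 ≤ ((1 - t) ^ d)⁻¹ := by have := sub_nonneg.2 ht1; positivity
  calc interpolationSlice μ Ω f g d x t ≤ ∫ y in Ω, Cf * g y * ((1 - t) ^ d)⁻¹ ∂μ :=
        setIntegral_mono_on (integrableOn_interpolation_integrand hf hf0 hfC hg _)
          ((hg.const_mul Cf).mul_const _) hΩ fun y _ ↦ by
            gcongr
            · exact hg0 y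
            · exact hfC _
    _ = Cf * ((1 - t) ^ d)⁻¹ := by rw [integral_mul_const, integral_const_mul, hg1, mul_one]

variable [FiniteDimensional ℝ E] [μ.IsAddHaarMeasure]

theorem integral_comp_interpolation (f : E → ℝ) (x : E) (t : ℝ) :
    ∫ y, f ((1 - t)⁻¹ • (x - t • y)) ∂μ = |((1 - t) / t) ^ finrank ℝ E| * ∫ z, f z ∂μ := by
  rw [Measure.integral_comp_smul μ (fun z ↦ f ((1 - t)⁻¹ • (x - z))),
    integral_sub_left_eq_self (fun z ↦ f ((1 - t)⁻¹ • z)) μ x, Measure.integral_comp_smul,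
    smul_smul, smul_eq_mul, ← abs_mul]
  congr 2
  rw [div_pow, inv_pow, inv_inv, div_eq_inv_mul]

theorem integrable_comp_interpolation (hf : Integrable f μ) (x : E) (ht0 : t ≠ 0) (ht1 : t ≠ 1) :
    Integrable (fun y ↦ f ((1 - t)⁻¹ • (x - t • y))) μ :=
  ((hf.comp_smul (inv_ne_zero (sub_ne_zero.2 ht1.symm))).comp_sub_left x).comp_smul ht0

theorem interpolationSlice_le_right {Cg : ℝ} (hΩ : MeasurableSet Ω) (hf : Integrable f μ)
    (hf0 : ∀ z, 0 ≤ f z) (hf1 : ∫ z, f z ∂μ = 1) (hg : Measurable g) (hg0 : ∀ z, 0 ≤ g z)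
    (hgC : ∀ z, g z ≤ Cg) (hd : finrank ℝ E = d) (ht0 : 0 < t) (ht1 : t < 1) :
    interpolationSlice μ Ω f g d x t ≤ Cg * (t ^ d)⁻¹ := by
  have h1t : 0 < 1 - t := by linarith
  have hCg : 0 ≤ Cg := (hg0 x).trans (hgC x)
  have hfφ := integrable_comp_interpolation hf x ht0.ne' ht1.ne
  calc interpolationSlice μ Ω f g d x t
      ≤ ∫ y in Ω, f ((1 - t)⁻¹ • (x - t • y)) * Cg * ((1 - t) ^ d)⁻¹ ∂μ := by
        refine setIntegral_mono_on ?_ ((hfφ.mul_const Cg).mul_const _).integrableOn hΩ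
          fun y _ ↦ ?_
        · exact ((hfφ.mul_bdd hg.aestronglyMeasurable (ae_of_all _ fun y ↦
            (Real.norm_of_nonneg (hg0 y)).trans_le (hgC y))).mul_const _).integrableOn
        · have := hf0 ((1 - t)⁻¹ • (x - t • y))
          gcongr
          exact hgC y
    _ ≤ ∫ y, f ((1 - t)⁻¹ • (x - t • y)) * Cg * ((1 - t) ^ d)⁻¹ ∂μ :=
        setIntegral_le_integral ((hfφ.mul_const Cg).mul_const _)
          (ae_of_all _ fun y ↦ by have := hf0 ((1 - t)⁻¹ • (x - t • y)); positivity)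
    _ = Cg * (t ^ d)⁻¹ := by
        rw [integral_mul_const, integral_mul_const, integral_comp_interpolation, hf1, hd,
          abs_of_nonneg (by positivity), div_pow]
        field_simp

theorem interpolationSlice_le_two_pow {Cf Cg : ℝ} (hΩ : MeasurableSet Ω) (hf : Measurable f)
    (hfi : Integrable f μ) (hf0 : ∀ z, 0 ≤ f z) (hfC : ∀ z, f z ≤ Cf) (hf1 : ∫ z, f z ∂μ = 1)
    (hg : Measurable g) (hgi : IntegrableOn g Ω μ) (hg0 : ∀ z, 0 ≤ g z) (hgC : ∀ z, g z ≤ Cg)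
    (hg1 : ∫ y in Ω, g y ∂μ = 1) (hd : finrank ℝ E = d) (ht : t ∈ Ioo 0 1) :
    interpolationSlice μ Ω f g d x t ≤ max Cf Cg * 2 ^ d := by
  have inv_pow_le {s : ℝ} (hs : 1 / 2 ≤ s) : (s ^ d)⁻¹ ≤ 2 ^ d := by
    rw [← inv_pow]
    exact pow_le_pow_left₀ (by positivity)
      ((inv_le_comm₀ (by linarith : (0 : ℝ) < s) two_pos).2 (by linarith)) d
  have hM : 0 ≤ max Cf Cg := (hf0 x).trans ((hfC x).trans (le_max_left _ _))
  rcases le_total t (1 / 2) with h | h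
  · calc _ ≤ Cf * ((1 - t) ^ d)⁻¹ :=
          interpolationSlice_le_left hΩ hf hf0 hfC hgi hg0 hg1 ht.2.le
      _ ≤ max Cf Cg * 2 ^ d :=
          mul_le_mul (le_max_left _ _) (inv_pow_le (by linarith))
            (inv_nonneg.2 (pow_nonneg (by linarith [ht.2]) d)) hM
  · calc _ ≤ Cg * (t ^ d)⁻¹ :=
          interpolationSlice_le_right hΩ hfi hf0 hf1 hg hg0 hgC hd ht.1 ht.2
      _ ≤ max Cf Cg * 2 ^ d :=
          mul_le_mul (le_max_right _ _) (inv_pow_le h) (inv_nonneg.2 (pow_nonneg ht.1.le d)) hM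

theorem integrableOn_interpolationSlice {Cf Cg : ℝ} (hΩ : MeasurableSet Ω) (hf : Measurable f)
    (hfi : Integrable f μ) (hf0 : ∀ z, 0 ≤ f z) (hfC : ∀ z, f z ≤ Cf) (hf1 : ∫ z, f z ∂μ = 1)
    (hg : Measurable g) (hgi : IntegrableOn g Ω μ) (hg0 : ∀ z, 0 ≤ g z) (hgC : ∀ z, g z ≤ Cg)
    (hg1 : ∫ y in Ω, g y ∂μ = 1) (hd : finrank ℝ E = d) :
    IntegrableOn (interpolationSlice μ Ω f g d x) (Ioo 0 1) := by
  have hmeas : StronglyMeasurable (interpolationSlice μ Ω f g d x) :=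
    (Measurable.stronglyMeasurable (by fun_prop : Measurable fun p : ℝ × E ↦
      f ((1 - p.1)⁻¹ • (x - p.1 • p.2)) * g p.2 * ((1 - p.1) ^ d)⁻¹)).integral_prod_right'
  refine Measure.integrableOn_of_bounded measure_Ioo_lt_top.ne hmeas.aestronglyMeasurable
    (M := max Cf Cg * 2 ^ d)
    ((ae_restrict_iff' measurableSet_Ioo).2 (ae_of_all _ fun t ht ↦ ?_))
  rw [Real.norm_of_nonneg (interpolationSlice_nonneg hf0 hg0 ht.2.le)]
  exact interpolationSlice_le_two_pow hΩ hf hfi hf0 hfC hf1 hg hgi hg0 hgC hg1 hd ht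

end

theorem stmt_3_general (d : ℕ) (Ω : Set (EuclideanSpace ℝ (Fin d)))
    (hΩo : IsOpen Ω) (hΩb : Bornology.IsBounded Ω) :
    ∃ C : ℝ, 0 < C ∧
      ∀ (f g : EuclideanSpace ℝ (Fin d) → ℝ) (ε Cf Cg : ℝ),
        Measurable f → Measurable g →
        (∀ x, 0 ≤ f x) → (∀ x, 0 ≤ g x) →
        (∀ x, f x ≤ Cf) → (∀ x, g x ≤ Cg) →
        (∀ x, x ∉ Ω → f x = 0) → (∀ x, x ∉ Ω → g x = 0) →
        (∫ x, f x = 1) → (∫ x, g x = 1) →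
        0 < ε → (∀ x ∈ Ω, ε ≤ f x) →
        ∀ x ∈ Ω,
          C * ε * infDist x (frontier Ω) ≤
            ∫ t in Ioo (0:ℝ) 1, ∫ y in Ω,
              f ((1 - t)⁻¹ • (x - t • y)) * g y * ((1 - t) ^ d)⁻¹ := by
  refine ⟨(2 * (diam Ω + 1))⁻¹, by positivity, ?_⟩
  intro f g ε Cf Cg hf hg hf0 hg0 hfC hgC _ hgΩ hf1 hg1 _ hεf x hx
  have hΩ := hΩo.measurableSet
  have hfi := integrable_of_integral_eq_one hf1
  have hgi := (integrable_of_integral_eq_one hg1).integrableOn (s := Ω)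
  have hgΩ1 : ∫ y in Ω, g y = 1 := by rwa [setIntegral_eq_integral_of_forall_compl_eq_zero hgΩ]
  have hd := finrank_euclideanSpace_fin (𝕜 := ℝ) (n := d)
  set T := infDist x (frontier Ω) / (2 * (diam Ω + 1))
  have hT1 : T ≤ 1 := by
    have := infDist_frontier_le_diam hΩb hx
    rw [div_le_one (by positivity)]
    linarith [diam_nonneg (s := Ω)]
  calc (2 * (diam Ω + 1))⁻¹ * ε * infDist x (frontier Ω) = ε * (T - 0) := by ring
    _ ≤ ∫ t in Ioo 0 1, interpolationSlice volume Ω f g d x t :=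
      mul_sub_le_setIntegral_Ioo
        (integrableOn_interpolationSlice hΩ hf hfi hf0 hfC hf1 hg hgi hg0 hgC hgΩ1 hd)
        (fun t ht ↦ interpolationSlice_nonneg hf0 hg0 ht.2.le)
        (div_nonneg infDist_nonneg (by positivity)) hT1
        fun t ht ↦ le_interpolationSlice hΩ hf hf0 hfC hgi hg0 hgΩ1 ht.1.le (by linarith [ht.2])
          (mapsTo_interpolation hΩb hx ht.1.le ht.2) hεf

/-- if `Ω ⊂ ℝ^d` is open, bounded and convex, `f, g` are bounded probability
densities on `Ω` (extended by zero) and `inf_Ω f = ε > 0`, then there is a constant `C > 0`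
depending only on `Ω` such that the interpolation density `σ` satisfies
`σ(x) ≥ C ε dist(x, ∂Ω)` for all `x ∈ Ω`. -/
theorem stmt_3 (d : ℕ) (Ω : Set (EuclideanSpace ℝ (Fin d)))
    (hΩo : IsOpen Ω) (hΩb : Bornology.IsBounded Ω) (hΩc : Convex ℝ Ω) :
    ∃ C : ℝ, 0 < C ∧
      ∀ (f g : EuclideanSpace ℝ (Fin d) → ℝ) (ε Cf Cg : ℝ),
        Measurable f → Measurable g →
        (∀ x, 0 ≤ f x) → (∀ x, 0 ≤ g x) →
        (∀ x, f x ≤ Cf) → (∀ x, g x ≤ Cg) →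
        (∀ x, x ∉ Ω → f x = 0) → (∀ x, x ∉ Ω → g x = 0) →
        (∫ x, f x = 1) → (∫ x, g x = 1) →
        0 < ε → (∀ x ∈ Ω, ε ≤ f x) →
        ∀ x ∈ Ω,
          C * ε * infDist x (frontier Ω) ≤
            ∫ t in Ioo (0:ℝ) 1, ∫ y in Ω,
              f ((1 - t)⁻¹ • (x - t • y)) * g y * ((1 - t) ^ d)⁻¹ :=
  stmt_3_general d Ω hΩo hΩb
end

section
/- Let σ(x) > 0, λ > 0, and ξ* ∈ ℝ^d. Define φ(ξ) = ξ*·ξ + (λσ(x)/2)(|ξ|−1)₊² + |ξ*|²/(2λσ(x)) + |ξ*|. Then for all ξ ∈ ℝ^d, φ(ξ) ≥ (1/(2λσ(x))) |ξ* + λσ(x)(|ξ|−1)₊ · ξ/|ξ| |², where (|ξ|−1)₊ ξ/|ξ| is interpreted as 0 when ξ = 0. -/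
/-!
Write `c = λσ(x)`, `t = |ξ|`, `m = (t - 1)₊` and `v = (m / t) ξ`, so that `|v| = m`.
Expanding the square gives `|ξ* + c v|² / (2c) = |ξ*|² / (2c) + ξ*·v + c m² / 2`, so the claim
reduces to `(m / t) ξ*·ξ ≤ ξ*·ξ + |ξ*|`. This holds because `0 ≤ t - m ≤ 1` and
`ξ*·ξ ≥ -|ξ*| t`: indeed `(1 - m/t)(ξ*·ξ + |ξ*| t) ≥ 0` and `(t - m) |ξ*| ≤ |ξ*|`.
-/

open RealInnerProductSpace

variable {E : Type*} [NormedAddCommGroup E] [InnerProductSpace ℝ E]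

/-- The part of `ξ` outside the closed unit ball, `ξ - proj_{B₁} ξ`; it is `0` at `ξ = 0`
because `0 / 0 = 0`. -/
noncomputable def unitBallExcess (ξ : E) : E :=
  (max (‖ξ‖ - 1) 0 / ‖ξ‖) • ξ

theorem norm_unitBallExcess (ξ : E) : ‖unitBallExcess ξ‖ = max (‖ξ‖ - 1) 0 := by
  rcases eq_or_ne ξ 0 with rfl | hξ
  · simp [unitBallExcess]
  · have ht : 0 < ‖ξ‖ := norm_pos_iff.mpr hξ
    rw [unitBallExcess, norm_smul, Real.norm_of_nonneg (by positivity), div_mul_cancel₀ _ ht.ne']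

theorem inner_unitBallExcess_le (x ξ : E) : ⟪x, unitBallExcess ξ⟫ ≤ ⟪x, ξ⟫ + ‖x‖ := by
  rw [unitBallExcess, real_inner_smul_right]
  rcases eq_or_ne ξ 0 with rfl | hξ
  · simp
  have ht : 0 < ‖ξ‖ := norm_pos_iff.mpr hξ
  set t := ‖ξ‖
  set m := max (t - 1) 0
  have hmt : m ≤ t := max_le (by linarith) ht.le
  have htm : t - m ≤ 1 := by linarith [le_max_left (t - 1) 0]
  have hcs : -(‖x‖ * t) ≤ ⟪x, ξ⟫ := by
    linarith [abs_real_inner_le_norm x ξ, neg_abs_le ⟪x, ξ⟫]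
  have hshift : 0 ≤ (t - m) / t * (⟪x, ξ⟫ + ‖x‖ * t) :=
    mul_nonneg (div_nonneg (sub_nonneg.2 hmt) ht.le) (by linarith)
  have hslack : (t - m) * ‖x‖ ≤ ‖x‖ := by
    nlinarith [norm_nonneg x]
  have hsplit : ⟪x, ξ⟫ - m / t * ⟪x, ξ⟫ = (t - m) / t * (⟪x, ξ⟫ + ‖x‖ * t) - (t - m) * ‖x‖ := by
    field_simp
    ring
  linarith

theorem one_div_two_mul_mul_norm_add_smul_sq {c : ℝ} (hc : c ≠ 0) (x v : E) :
    1 / (2 * c) * ‖x + c • v‖ ^ 2 = ‖x‖ ^ 2 / (2 * c) + ⟪x, v⟫ + c / 2 * ‖v‖ ^ 2 := by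
  rw [norm_add_sq_real, real_inner_smul_right, norm_smul, Real.norm_eq_abs, mul_pow, sq_abs]
  field_simp

/-- for `σ(x) = s > 0`, `λ > 0` and `ξ* ∈ ℝ^d`, the function
`φ(ξ) = ξ*·ξ + (λs/2)(|ξ|−1)₊² + |ξ*|²/(2λs) + |ξ*|` satisfies
`φ(ξ) ≥ (1/(2λs)) |ξ* + λs(|ξ|−1)₊ ξ/|ξ||²` for all `ξ`, with the convention that
`(|ξ|−1)₊ ξ/|ξ| = 0` when `ξ = 0` (automatic here since `‖0‖⁻¹ = 0⁻¹` smul gives `0`). -/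
theorem stmt_11 (d : ℕ) (lam s : ℝ) (hlam : 0 < lam) (hs : 0 < s)
    (ξstar : EuclideanSpace ℝ (Fin d)) (ξ : EuclideanSpace ℝ (Fin d)) :
    (1 / (2 * lam * s)) *
        ‖ξstar + (lam * s * (max (‖ξ‖ - 1) 0) / ‖ξ‖) • ξ‖ ^ 2
      ≤ (inner ℝ ξstar ξ : ℝ) + (lam * s / 2) * (max (‖ξ‖ - 1) 0) ^ 2
          + ‖ξstar‖ ^ 2 / (2 * lam * s) + ‖ξstar‖ := by
  have hc : lam * s ≠ 0 := (mul_pos hlam hs).ne'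
  have hvec : (lam * s * max (‖ξ‖ - 1) 0 / ‖ξ‖) • ξ = (lam * s) • unitBallExcess ξ := by
    rw [unitBallExcess, smul_smul, mul_div_assoc]
  rw [hvec, mul_assoc 2, one_div_two_mul_mul_norm_add_smul_sq hc, norm_unitBallExcess]
  linarith [inner_unitBallExcess_le ξstar ξ]
end
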